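/- arXiv:2112.09771 — 5 statements merged into one kernel-verified Lean document; each statement's English description precedes it below -/
import Mathlib

section
/- Let μ be a probability measure on Ω, let X be the Boolean sensitivity indicator of a record, and let M be the release indicator produced by the OSDPRR mechanism with parameter ε > 0 for X. Assume μ(X = 0) > 0 and μ(X = 1) > 0. Then μ(M = 0) > 0 and the posterior odds satisfy P(X = 0 | M = 0) / P(X = 1 | M = 0) = e^ε · μ(X = 0) / μ(X = 1). -/
open MeasureTheory Real

/-- Conditional probability `P(A | B) = μ(A ∩ B) / μ(B)`, as a real number. -/
noncomputable def condProb {Ω : Type*} [MeasurableSpace Ω] (μ : Measure Ω) (A B : Set Ω) : ℝ :=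
  (μ (A ∩ B)).toReal / (μ B).toReal

/-!
A sensitive record is never released, so `μ(M = 0 ∧ X = 0) = μ(X = 0)`; in particular
`μ(M = 0) > 0`. A non-sensitive record stays unreleased with probability `e^{-ε}`, so
`μ(M = 0 ∧ X = 1) = e^{-ε} μ(X = 1)`. Conditioning on `M = 0` divides both by the same positive
number, hence the posterior odds are the prior odds times `e^{ε}`.
-/

section OneSidedRelease

variable {Ω : Type*} [MeasurableSpace Ω] {μ : Measure Ω} {s s₀ s₁ t : Set Ω}

lemma condProb_div_condProb (hs : (μ s).toReal ≠ 0) (A B : Set Ω) :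
    condProb μ A s / condProb μ B s = (μ (A ∩ s)).toReal / (μ (B ∩ s)).toReal :=
  div_div_div_cancel_right₀ hs _ _

lemma measure_inter_compl_of_measure_inter_eq_zero (h : μ (t ∩ s) = 0) :
    μ (s ∩ tᶜ) = μ s :=
  measure_sdiff_null' (by rwa [Set.inter_comm])

lemma measure_compl_pos_of_measure_inter_eq_zero (hs : 0 < μ s) (h : μ (t ∩ s) = 0) :
    0 < μ tᶜ :=
  hs.trans_le <|
    measure_inter_compl_of_measure_inter_eq_zero h ▸ measure_mono Set.inter_subset_right

lemma measureReal_inter_compl_of_measureReal_inter_eq [IsFiniteMeasure μ] {q : ℝ}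
    (ht : MeasurableSet t) (h : μ.real (t ∩ s) = (1 - q) * μ.real s) :
    μ.real (s ∩ tᶜ) = q * μ.real s := by
  have hsplit := measureReal_sdiff_add_inter (μ := μ) (s := s) ht
  rw [Set.inter_comm s t, h] at hsplit
  rw [← Set.sdiff_eq]
  linarith

/-- Posterior odds equal the likelihood ratio `q⁻¹` times the prior odds. -/
lemma condProb_compl_div_condProb_compl [IsFiniteMeasure μ] {q : ℝ} (ht : MeasurableSet t)
    (hpos : 0 < μ tᶜ) (h₀ : μ (t ∩ s₀) = 0) (h₁ : μ.real (t ∩ s₁) = (1 - q) * μ.real s₁) :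
    condProb μ s₀ tᶜ / condProb μ s₁ tᶜ = q⁻¹ * (μ.real s₀ / μ.real s₁) := by
  rw [condProb_div_condProb (ENNReal.toReal_pos hpos.ne' (measure_ne_top μ _)).ne',
    measure_inter_compl_of_measure_inter_eq_zero h₀]
  change μ.real s₀ / μ.real (s₁ ∩ tᶜ) = _
  rw [measureReal_inter_compl_of_measureReal_inter_eq ht h₁]
  ring

end OneSidedRelease

theorem osdprr_posterior_odds_general {Ω : Type*} [MeasurableSpace Ω]
    (μ : Measure Ω) [IsProbabilityMeasure μ]
    (X M : Ω → Bool) (hMmeas : Measurable M)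
    (ε : ℝ)
    (hX0 : 0 < μ {ω | X ω = false})
    -- OSDPRR: a sensitive record is never released
    (hrel0 : μ {ω | M ω = true ∧ X ω = false} = 0)
    -- OSDPRR: a non-sensitive record is released with probability 1 - e^{-ε}
    (hrel1 : (μ {ω | M ω = true ∧ X ω = true}).toReal
        = (1 - Real.exp (-ε)) * (μ {ω | X ω = true}).toReal) :
    0 < μ {ω | M ω = false} ∧
      condProb μ {ω | X ω = false} {ω | M ω = false}
          / condProb μ {ω | X ω = true} {ω | M ω = false}
        = Real.exp ε * ((μ {ω | X ω = false}).toReal / (μ {ω | X ω = true}).toReal) := by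
  have hR : MeasurableSet {ω | M ω = true} := hMmeas (measurableSet_singleton true)
  have hnon : {ω | M ω = false} = {ω | M ω = true}ᶜ := by ext; simp
  have hpos : 0 < μ {ω | M ω = true}ᶜ := measure_compl_pos_of_measure_inter_eq_zero hX0 hrel0
  refine ⟨hnon ▸ hpos, ?_⟩
  rw [hnon, condProb_compl_div_condProb_compl (s₀ := {ω | X ω = false})
    (s₁ := {ω | X ω = true}) hR hpos hrel0 hrel1, exp_neg, inv_inv]
  rfl

/-- For the OSDPRR mechanism with parameter `ε > 0` applied to a record with
sensitivity indicator `X` (X = 1 means non-sensitive, M = 1 means released), the event of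
non-release has positive probability and the posterior odds of the record being sensitive given
non-release equal `e^ε` times the prior odds. -/
theorem osdprr_posterior_odds {Ω : Type*} [MeasurableSpace Ω]
    (μ : Measure Ω) [IsProbabilityMeasure μ]
    (X M : Ω → Bool) (hXmeas : Measurable X) (hMmeas : Measurable M)
    (ε : ℝ) (hε : 0 < ε)
    (hX0 : 0 < μ {ω | X ω = false}) (hX1 : 0 < μ {ω | X ω = true})
    -- OSDPRR: a sensitive record is never released
    (hrel0 : μ {ω | M ω = true ∧ X ω = false} = 0)
    -- OSDPRR: a non-sensitive record is released with probability 1 - e^{-ε}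
    (hrel1 : (μ {ω | M ω = true ∧ X ω = true}).toReal
        = (1 - Real.exp (-ε)) * (μ {ω | X ω = true}).toReal) :
    0 < μ {ω | M ω = false} ∧
      condProb μ {ω | X ω = false} {ω | M ω = false}
          / condProb μ {ω | X ω = true} {ω | M ω = false}
        = Real.exp ε * ((μ {ω | X ω = false}).toReal / (μ {ω | X ω = true}).toReal) :=
  osdprr_posterior_odds_general μ X M hMmeas ε hX0 hrel0 hrel1
end

section
/- Let μ be a probability measure on Ω, let Xᵢ, Xⱼ be Boolean sensitivity indicators with μ(Xᵢ = a ∧ Xⱼ = b) > 0 for all a, b ∈ {0,1}, and let Mᵢ be the release indicator produced by the OSDPRR mechanism with parameter εᵢ > 0 for Xᵢ, with Mᵢ conditionally independent of Xⱼ given Xᵢ (for all m, a, b: μ(Mᵢ = m ∧ Xᵢ = a ∧ Xⱼ = b)·μ(Xᵢ = a) = μ(Mᵢ = m ∧ Xᵢ = a)·μ(Xᵢ = a ∧ Xⱼ = b)). Set δ₁ = P(Xᵢ = 0 | Xⱼ = 0) and δ₂ = P(Xᵢ = 0 | Xⱼ = 1). Then P(Xⱼ = 0 | Mᵢ = 0)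 / P(Xⱼ = 1 | Mᵢ = 0) = [(δ₁(e^{εᵢ} − 1) + 1) / (δ₂(e^{εᵢ} − 1) + 1)] · μ(Xⱼ = 0) / μ(Xⱼ = 1). -/
open MeasureTheory Real

/-!
Write `p_{ab} = μ(Xᵢ = a ∧ Xⱼ = b)`. OSDPRR withholds a sensitive record always and a
non-sensitive one with probability `e^{-ε}`; conditional independence transfers these withholding
probabilities to the joint events, so `μ(Xⱼ = b ∧ Mᵢ = 0) = p_{0b} + e^{-ε} p_{1b}`. Hence the
posterior odds are `(p₀₀ e^ε + p₁₀) / (p₀₁ e^ε + p₁₁)`, and as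
`δ (e^ε - 1) + 1 = (p_{0b} e^ε + p_{1b}) / (p_{0b} + p_{1b})` for `δ = p_{0b} / (p_{0b} + p_{1b})`,
this is the stated factor times the prior odds.
-/

namespace MeasureTheory

variable {Ω : Type*} [MeasurableSpace Ω] {μ : Measure Ω} [IsFiniteMeasure μ]

theorem measureReal_bool_false_inter_add_true_inter {Y : Ω → Bool} (hY : Measurable Y)
    (S : Set Ω) : μ.real ({ω | Y ω = false} ∩ S) + μ.real ({ω | Y ω = true} ∩ S) = μ.real S := by
  have hcompl : {ω | Y ω = false} = {ω | Y ω = true}ᶜ := by ext ω; simp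
  rw [hcompl, Set.inter_comm _ S, Set.inter_comm _ S, ← Set.sdiff_eq, add_comm]
  exact measureReal_inter_add_sdiff (hY (measurableSet_singleton true))

theorem measureReal_inter_inter_eq_mul_of_condIndep {A B C : Set Ω} {c : ℝ}
    (hindep : μ (A ∩ (B ∩ C)) * μ B = μ (A ∩ B) * μ (B ∩ C))
    (hAB : μ.real (A ∩ B) = c * μ.real B) :
    μ.real (A ∩ (B ∩ C)) = c * μ.real (B ∩ C) := by
  have hindep' : μ.real (A ∩ (B ∩ C)) * μ.real B = μ.real (A ∩ B) * μ.real (B ∩ C) := by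
    simp only [measureReal_def, ← ENNReal.toReal_mul, hindep]
  rcases eq_or_ne (μ.real B) 0 with hB | hB
  · have hABC : μ.real (A ∩ (B ∩ C)) ≤ μ.real B :=
      measureReal_mono (Set.inter_subset_right.trans Set.inter_subset_left)
    have hBC : μ.real (B ∩ C) ≤ μ.real B := measureReal_mono Set.inter_subset_left
    rw [hB] at hABC hBC
    rw [le_antisymm hABC measureReal_nonneg, le_antisymm hBC measureReal_nonneg, mul_zero]
  · apply mul_right_cancel₀ hB
    rw [hindep', hAB]
    ring

theorem measureReal_inter_eq_add_of_condIndep {Y : Ω → Bool} (hY : Measurable Y) {A C : Set Ω}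
    {c₀ c₁ : ℝ}
    (hindep : ∀ a, μ (A ∩ ({ω | Y ω = a} ∩ C)) * μ {ω | Y ω = a}
      = μ (A ∩ {ω | Y ω = a}) * μ ({ω | Y ω = a} ∩ C))
    (h₀ : μ.real (A ∩ {ω | Y ω = false}) = c₀ * μ.real {ω | Y ω = false})
    (h₁ : μ.real (A ∩ {ω | Y ω = true}) = c₁ * μ.real {ω | Y ω = true}) :
    μ.real (C ∩ A)
      = c₀ * μ.real ({ω | Y ω = false} ∩ C) + c₁ * μ.real ({ω | Y ω = true} ∩ C) := by
  have hperm (a : Bool) : {ω | Y ω = a} ∩ (C ∩ A) = A ∩ ({ω | Y ω = a} ∩ C) := by ac_rfl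
  rw [← measureReal_bool_false_inter_add_true_inter hY, hperm, hperm,
    measureReal_inter_inter_eq_mul_of_condIndep (hindep false) h₀,
    measureReal_inter_inter_eq_mul_of_condIndep (hindep true) h₁]

end MeasureTheory

theorem posterior_odds_eq_factor_mul_prior_odds {p₀₀ p₀₁ p₁₀ p₁₁ t E : ℝ} (ht : t ≠ 0) (hE : E ≠ 0)
    (h₀ : p₀₀ + p₁₀ ≠ 0) (h₁ : p₀₁ + p₁₁ ≠ 0) :
    (p₀₀ + E⁻¹ * p₁₀) / t / ((p₀₁ + E⁻¹ * p₁₁) / t)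
      = ((p₀₀ / (p₀₀ + p₁₀) * (E - 1) + 1) / (p₀₁ / (p₀₁ + p₁₁) * (E - 1) + 1))
        * ((p₀₀ + p₁₀) / (p₀₁ + p₁₁)) := by
  have hδ : ∀ {p q : ℝ}, p + q ≠ 0 → p / (p + q) * (E - 1) + 1 = (p * E + q) / (p + q) := by
    intro p q hpq
    field_simp
    ring
  rw [div_div_div_cancel_right₀ ht, hδ h₀, hδ h₁]
  calc (p₀₀ + E⁻¹ * p₁₀) / (p₀₁ + E⁻¹ * p₁₁) = (p₀₀ * E + p₁₀) / (p₀₁ * E + p₁₁) := by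
        rw [← mul_div_mul_right _ _ hE]
        congr 1 <;> field_simp
    _ = _ := by field_simp

theorem osdprr_dependent_leakage_not_released_general {Ω : Type*} [MeasurableSpace Ω]
    (μ : Measure Ω) [IsProbabilityMeasure μ]
    (Xi Xj Mi : Ω → Bool)
    (hXi : Measurable Xi) (hMi : Measurable Mi)
    (εi : ℝ)
    (hpos : ∀ a b : Bool, 0 < μ {ω | Xi ω = a ∧ Xj ω = b})
    -- OSDPRR for Xᵢ: a sensitive record is never released
    (hrel0 : μ {ω | Mi ω = true ∧ Xi ω = false} = 0)
    -- OSDPRR for Xᵢ: a non-sensitive record is released with probability 1 - e^{-εᵢ}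
    (hrel1 : (μ {ω | Mi ω = true ∧ Xi ω = true}).toReal
        = (1 - Real.exp (-εi)) * (μ {ω | Xi ω = true}).toReal)
    -- conditional independence of Mᵢ and Xⱼ given Xᵢ
    (hCI : ∀ m a b : Bool,
      μ {ω | Mi ω = m ∧ Xi ω = a ∧ Xj ω = b} * μ {ω | Xi ω = a}
        = μ {ω | Mi ω = m ∧ Xi ω = a} * μ {ω | Xi ω = a ∧ Xj ω = b}) :
    condProb μ {ω | Xj ω = false} {ω | Mi ω = false}
        / condProb μ {ω | Xj ω = true} {ω | Mi ω = false}
      = ((condProb μ {ω | Xi ω = false} {ω | Xj ω = false} * (Real.exp εi - 1) + 1)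
          / (condProb μ {ω | Xi ω = false} {ω | Xj ω = true} * (Real.exp εi - 1) + 1))
        * ((μ {ω | Xj ω = false}).toReal / (μ {ω | Xj ω = true}).toReal) := by
  simp only [condProb, ← measureReal_def, Set.ofPred_and] at hrel1 ⊢
  simp only [Set.ofPred_and] at hpos hrel0 hCI
  have hkept_false : μ.real ({ω | Mi ω = false} ∩ {ω | Xi ω = false})
      = 1 * μ.real {ω | Xi ω = false} := by
    have hnull : μ.real ({ω | Mi ω = true} ∩ {ω | Xi ω = false}) = 0 := by
      simp [Measure.real, hrel0]
    linear_combination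
      measureReal_bool_false_inter_add_true_inter (μ := μ) hMi {ω | Xi ω = false} - hnull
  have hkept_true : μ.real ({ω | Mi ω = false} ∩ {ω | Xi ω = true})
      = exp (-εi) * μ.real {ω | Xi ω = true} := by
    linear_combination
      measureReal_bool_false_inter_add_true_inter (μ := μ) hMi {ω | Xi ω = true} - hrel1
  have hnum (b : Bool) := measureReal_inter_eq_add_of_condIndep (C := {ω | Xj ω = b}) hXi
    (fun a => hCI false a b) hkept_false hkept_true
  have hden : μ.real {ω | Mi ω = false}
      = μ.real {ω | Xi ω = false} + exp (-εi) * μ.real {ω | Xi ω = true} := by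
    rw [← measureReal_bool_false_inter_add_true_inter hXi, Set.inter_comm, hkept_false,
      Set.inter_comm, hkept_true, one_mul]
  have hmarg (b : Bool) : μ.real {ω | Xj ω = b}
      = μ.real ({ω | Xi ω = false} ∩ {ω | Xj ω = b})
        + μ.real ({ω | Xi ω = true} ∩ {ω | Xj ω = b}) :=
    (measureReal_bool_false_inter_add_true_inter hXi _).symm
  have hjoint_pos (a b : Bool) : 0 < μ.real ({ω | Xi ω = a} ∩ {ω | Xj ω = b}) :=
    ENNReal.toReal_pos (hpos a b).ne' (measure_ne_top μ _)
  have hsensitive_pos : 0 < μ.real {ω | Xi ω = false} :=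
    (hjoint_pos false false).trans_le (measureReal_mono Set.inter_subset_left)
  rw [hnum, hnum, hden, hmarg false, hmarg true, one_mul, one_mul, exp_neg]
  exact posterior_odds_eq_factor_mul_prior_odds (by positivity) (exp_pos εi).ne'
    (by linarith [hjoint_pos false false, hjoint_pos true false])
    (by linarith [hjoint_pos false true, hjoint_pos true true])

/-- **Theorem 2, main result.** With `δ₁ = P(Xᵢ = 0 | Xⱼ = 0)` and
`δ₂ = P(Xᵢ = 0 | Xⱼ = 1)`, the information leakage on `Xⱼ` from not releasing record `rᵢ` under
OSDPRR with parameter `εᵢ` is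
`P(Xⱼ=0 | Mᵢ=0) / P(Xⱼ=1 | Mᵢ=0)
  = [(δ₁(e^{εᵢ}−1)+1)/(δ₂(e^{εᵢ}−1)+1)] · P(Xⱼ=0)/P(Xⱼ=1)`. -/
theorem osdprr_dependent_leakage_not_released {Ω : Type*} [MeasurableSpace Ω]
    (μ : Measure Ω) [IsProbabilityMeasure μ]
    (Xi Xj Mi : Ω → Bool)
    (hXi : Measurable Xi) (hXj : Measurable Xj) (hMi : Measurable Mi)
    (εi : ℝ) (hεi : 0 < εi)
    (hpos : ∀ a b : Bool, 0 < μ {ω | Xi ω = a ∧ Xj ω = b})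
    -- OSDPRR for Xᵢ: a sensitive record is never released
    (hrel0 : μ {ω | Mi ω = true ∧ Xi ω = false} = 0)
    -- OSDPRR for Xᵢ: a non-sensitive record is released with probability 1 - e^{-εᵢ}
    (hrel1 : (μ {ω | Mi ω = true ∧ Xi ω = true}).toReal
        = (1 - Real.exp (-εi)) * (μ {ω | Xi ω = true}).toReal)
    -- conditional independence of Mᵢ and Xⱼ given Xᵢ
    (hCI : ∀ m a b : Bool,
      μ {ω | Mi ω = m ∧ Xi ω = a ∧ Xj ω = b} * μ {ω | Xi ω = a}
        = μ {ω | Mi ω = m ∧ Xi ω = a} * μ {ω | Xi ω = a ∧ Xj ω = b}) :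
    condProb μ {ω | Xj ω = false} {ω | Mi ω = false}
        / condProb μ {ω | Xj ω = true} {ω | Mi ω = false}
      = ((condProb μ {ω | Xi ω = false} {ω | Xj ω = false} * (Real.exp εi - 1) + 1)
          / (condProb μ {ω | Xi ω = false} {ω | Xj ω = true} * (Real.exp εi - 1) + 1))
        * ((μ {ω | Xj ω = false}).toReal / (μ {ω | Xj ω = true}).toReal) :=
  osdprr_dependent_leakage_not_released_general μ Xi Xj Mi hXi hMi εi hpos hrel0 hrel1 hCI
end

section
/- Let μ be a probability measure on Ω, let Xᵢ, Xⱼ be Boolean sensitivity indicators with μ(Xᵢ = a ∧ Xⱼ = b) > 0 for all a, b ∈ {0,1}, and let Mᵢ⁽¹⁾, …, Mᵢ⁽ⁿ⁾ each be release indicators produced by the OSDPRR mechanism with parameter εᵢ > 0 for Xᵢ, which are mutually conditionally independent given Xᵢ and such that the tuple (Mᵢ⁽¹⁾, …, Mᵢ⁽ⁿ⁾) is conditionally independent of Xⱼ given Xᵢ. Set δ₁ = P(Xᵢ = 0 | Xⱼ = 0), δ₂ = P(Xᵢ = 0 | Xⱼ = 1), and let E be the event that Mᵢ⁽ᵏ⁾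 = 0 for all k. Then P(Xⱼ = 0 | E) / P(Xⱼ = 1 | E) = [(δ₁(e^{nεᵢ} − 1) + 1) / (δ₂(e^{nεᵢ} − 1) + 1)] · μ(Xⱼ = 0) / μ(Xⱼ = 1). -/
open MeasureTheory Real

section

variable {Ω : Type*} [MeasurableSpace Ω] {μ : Measure Ω}

lemma measureReal_eq_add_of_bool [IsFiniteMeasure μ] {f : Ω → Bool} (hf : Measurable f)
    (p : Ω → Prop) :
    μ.real {ω | p ω} = μ.real {ω | f ω = false ∧ p ω} + μ.real {ω | f ω = true ∧ p ω} := by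
  rw [← measureReal_inter_add_sdiff (hf (measurableSet_singleton false)) (s := {ω | p ω})]
  congr 2 <;> ext ω <;> cases f ω <;> simp [and_comm]

/-- The OSDPRR mechanism with parameter `ε` for the sensitivity indicator `X`
(`true` = non-sensitive, `M = true` = released). -/
structure IsOSDPRR (μ : Measure Ω) (X : Ω → Bool) (ε : ℝ) (M : Ω → Bool) : Prop where
  measure_release_sensitive : μ {ω | M ω = true ∧ X ω = false} = 0
  measureReal_release_nonsensitive :
    μ.real {ω | M ω = true ∧ X ω = true} = (1 - exp (-ε)) * μ.real {ω | X ω = true}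

noncomputable def withholdProb (ε : ℝ) : Bool → ℝ
  | false => 1
  | true => exp (-ε)

lemma withholdProb_pow (ε : ℝ) (n : ℕ) (a : Bool) :
    withholdProb ε a ^ n = withholdProb (n * ε) a := by
  cases a
  · simp [withholdProb]
  · simp only [withholdProb, ← exp_nat_mul, mul_neg]

lemma IsOSDPRR.measureReal_withhold [IsFiniteMeasure μ] {X M : Ω → Bool} {ε : ℝ}
    (h : IsOSDPRR μ X ε M) (hM : Measurable M) (a : Bool) :
    μ.real {ω | M ω = false ∧ X ω = a} = withholdProb ε a * μ.real {ω | X ω = a} := by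
  cases a
  · have hdiff : {ω | X ω = false} \ {ω | M ω = true ∧ X ω = false}
        = {ω | M ω = false ∧ X ω = false} := by
      ext ω
      simp only [Set.mem_sdiff, Set.mem_ofPred_eq]
      cases M ω <;> cases X ω <;> decide
    rw [withholdProb, one_mul, measureReal_def, measureReal_def, ← hdiff,
      measure_sdiff_null h.measure_release_sensitive]
  · have hsplit := measureReal_eq_add_of_bool hM (fun ω => X ω = true) (μ := μ)
    rw [h.measureReal_release_nonsensitive] at hsplit
    rw [withholdProb]
    linarith

lemma measureReal_forall_inter_of_condIndep [IsFiniteMeasure μ] {n : ℕ} (P : Fin n → Set Ω)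
    {A : Set Ω} (hA : μ A ≠ 0) {q : ℝ}
    (hCI : μ ({ω | ∀ k, ω ∈ P k} ∩ A) * μ A ^ (n - 1) = ∏ k, μ (P k ∩ A))
    (hP : ∀ k, μ.real (P k ∩ A) = q * μ.real A) :
    μ.real ({ω | ∀ k, ω ∈ P k} ∩ A) = q ^ n * μ.real A := by
  cases n with
  | zero => simp
  | succ m =>
    have hCI' := congrArg ENNReal.toReal hCI
    simp only [ENNReal.toReal_mul, ENNReal.toReal_pow, ENNReal.toReal_prod, ← measureReal_def,
      hP, Finset.prod_const, Finset.card_univ, Fintype.card_fin, Nat.add_sub_cancel] at hCI'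
    have hA' : μ.real A ^ m ≠ 0 := pow_ne_zero _ ((measureReal_ne_zero_iff).2 hA)
    apply mul_right_cancel₀ hA'
    rw [hCI']
    ring

lemma measureReal_inter_of_condIndep [IsFiniteMeasure μ] {E A B : Set Ω} (hA : μ A ≠ 0)
    (hCI : μ (E ∩ (A ∩ B)) * μ A = μ (E ∩ A) * μ (A ∩ B)) {c : ℝ}
    (hE : μ.real (E ∩ A) = c * μ.real A) :
    μ.real (E ∩ (A ∩ B)) = c * μ.real (A ∩ B) := by
  have hCI' := congrArg ENNReal.toReal hCI
  simp only [ENNReal.toReal_mul, ← measureReal_def, hE] at hCI'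
  apply mul_right_cancel₀ ((measureReal_ne_zero_iff).2 hA)
  rw [hCI']
  ring

lemma measureReal_and_forall_withheld [IsFiniteMeasure μ] {n : ℕ} {X Y : Ω → Bool} {ε : ℝ}
    {M : Fin n → Ω → Bool} (hM : ∀ k, Measurable (M k)) (hosdprr : ∀ k, IsOSDPRR μ X ε (M k))
    {a b : Bool} (ha : μ {ω | X ω = a} ≠ 0)
    (hCI1 : μ {ω | (∀ k, M k ω = false) ∧ X ω = a} * μ {ω | X ω = a} ^ (n - 1)
      = ∏ k, μ {ω | M k ω = false ∧ X ω = a})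
    (hCI2 : μ {ω | (∀ k, M k ω = false) ∧ X ω = a ∧ Y ω = b} * μ {ω | X ω = a}
      = μ {ω | (∀ k, M k ω = false) ∧ X ω = a} * μ {ω | X ω = a ∧ Y ω = b}) :
    μ.real {ω | X ω = a ∧ Y ω = b ∧ ∀ k, M k ω = false}
      = withholdProb (n * ε) a * μ.real {ω | X ω = a ∧ Y ω = b} := by
  have hall : μ.real {ω | (∀ k, M k ω = false) ∧ X ω = a}
      = withholdProb (n * ε) a * μ.real {ω | X ω = a} := by
    rw [← withholdProb_pow]
    exact measureReal_forall_inter_of_condIndep (fun k => {ω | M k ω = false}) ha hCI1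
      fun k => (hosdprr k).measureReal_withhold (hM k) a
  calc μ.real {ω | X ω = a ∧ Y ω = b ∧ ∀ k, M k ω = false}
      = μ.real {ω | (∀ k, M k ω = false) ∧ X ω = a ∧ Y ω = b} := by
        congr 1
        ext ω
        simp only [Set.mem_ofPred_eq]
        tauto
    _ = _ := measureReal_inter_of_condIndep ha hCI2 hall

lemma add_inv_mul_div_add_inv_mul_eq {a b c d t : ℝ} (ha : 0 < a) (hb : 0 < b) (hc : 0 < c)
    (hd : 0 < d) (ht : 0 < t) :
    (a + t⁻¹ * b) / (c + t⁻¹ * d)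
      = ((a / (a + b) * (t - 1) + 1) / (c / (c + d) * (t - 1) + 1)) * ((a + b) / (c + d)) := by
  have hodds : ∀ x y : ℝ, 0 < x → 0 < y → x / (x + y) * (t - 1) + 1 = (t * x + y) / (x + y) := by
    intro x y hx hy
    field_simp
    ring
  rw [hodds a b ha hb, hodds c d hc hd]
  have hden : t * c + d ≠ 0 := by positivity
  field_simp

end

theorem osdprr_dependent_leakage_n_queries_general {Ω : Type*} [MeasurableSpace Ω]
    (μ : Measure Ω) [IsProbabilityMeasure μ]
    (Xi Xj : Ω → Bool) (hXi : Measurable Xi)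
    (n : ℕ) (M : Fin n → Ω → Bool) (hM : ∀ k, Measurable (M k))
    (εi : ℝ)
    (hpos : ∀ a b : Bool, 0 < μ {ω | Xi ω = a ∧ Xj ω = b})
    -- each mechanism is an OSDPRR with parameter εᵢ for Xᵢ
    (hrel0 : ∀ k, μ {ω | M k ω = true ∧ Xi ω = false} = 0)
    (hrel1 : ∀ k, (μ {ω | M k ω = true ∧ Xi ω = true}).toReal
        = (1 - Real.exp (-εi)) * (μ {ω | Xi ω = true}).toReal)
    -- mutual conditional independence of the mechanisms given Xᵢ
    (hCI1 : ∀ (m : Fin n → Bool) (a : Bool),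
      μ {ω | (∀ k, M k ω = m k) ∧ Xi ω = a} * μ {ω | Xi ω = a} ^ (n - 1)
        = ∏ k, μ {ω | M k ω = m k ∧ Xi ω = a})
    -- conditional independence of the tuple of mechanisms and Xⱼ given Xᵢ
    (hCI2 : ∀ (m : Fin n → Bool) (a b : Bool),
      μ {ω | (∀ k, M k ω = m k) ∧ Xi ω = a ∧ Xj ω = b} * μ {ω | Xi ω = a}
        = μ {ω | (∀ k, M k ω = m k) ∧ Xi ω = a} * μ {ω | Xi ω = a ∧ Xj ω = b}) :
    condProb μ {ω | Xj ω = false} {ω | ∀ k, M k ω = false}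
        / condProb μ {ω | Xj ω = true} {ω | ∀ k, M k ω = false}
      = ((condProb μ {ω | Xi ω = false} {ω | Xj ω = false} * (Real.exp (n * εi) - 1) + 1)
          / (condProb μ {ω | Xi ω = false} {ω | Xj ω = true} * (Real.exp (n * εi) - 1) + 1))
        * ((μ {ω | Xj ω = false}).toReal / (μ {ω | Xj ω = true}).toReal) := by
  have hp : ∀ a b, 0 < μ.real {ω | Xi ω = a ∧ Xj ω = b} := fun a b =>
    ENNReal.toReal_pos (hpos a b).ne' (measure_ne_top μ _)
  have hXi_ne : ∀ a, μ {ω | Xi ω = a} ≠ 0 := fun a =>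
    ((hpos a false).trans_le (measure_mono fun _ h => h.1)).ne'
  have hjoint : ∀ b, μ.real ({ω | Xj ω = b} ∩ {ω | ∀ k, M k ω = false})
      = μ.real {ω | Xi ω = false ∧ Xj ω = b}
        + (exp (n * εi))⁻¹ * μ.real {ω | Xi ω = true ∧ Xj ω = b} := fun b => by
    rw [show μ.real ({ω | Xj ω = b} ∩ {ω | ∀ k, M k ω = false}) = _ from
      measureReal_eq_add_of_bool hXi (fun ω => Xj ω = b ∧ ∀ k, M k ω = false)]
    rw [measureReal_and_forall_withheld hM (fun k => ⟨hrel0 k, hrel1 k⟩) (hXi_ne false)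
      (hCI1 _ false) (hCI2 _ false b), measureReal_and_forall_withheld hM
      (fun k => ⟨hrel0 k, hrel1 k⟩) (hXi_ne true) (hCI1 _ true) (hCI2 _ true b)]
    simp [withholdProb, exp_neg]
  have hmarg : ∀ b, μ.real {ω | Xj ω = b}
      = μ.real {ω | Xi ω = false ∧ Xj ω = b} + μ.real {ω | Xi ω = true ∧ Xj ω = b} :=
    fun b => measureReal_eq_add_of_bool hXi _
  have hE : 0 < μ.real {ω | ∀ k, M k ω = false} :=
    calc 0 < μ.real ({ω | Xj ω = false} ∩ {ω | ∀ k, M k ω = false}) := by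
          rw [hjoint false]
          exact add_pos (hp false false) (mul_pos (inv_pos.2 (exp_pos _)) (hp true false))
      _ ≤ _ := measureReal_mono Set.inter_subset_right
  simp only [condProb, ← measureReal_def]
  rw [div_div_div_cancel_right₀ hE.ne', hjoint, hjoint, hmarg, hmarg]
  exact add_inv_mul_div_add_inv_mul_eq (hp false false) (hp true false) (hp false true)
    (hp true true) (exp_pos _)

/-- **Corollary 1, composition over `n` queries.** With
`δ₁ = P(Xᵢ = 0 | Xⱼ = 0)` and `δ₂ = P(Xᵢ = 0 | Xⱼ = 1)`, if record `rᵢ` is not released in any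
of `n` independent OSDPRR queries with parameter `εᵢ` (event `E`), then
`P(Xⱼ=0 | E) / P(Xⱼ=1 | E)
  = [(δ₁(e^{nεᵢ}−1)+1)/(δ₂(e^{nεᵢ}−1)+1)] · P(Xⱼ=0)/P(Xⱼ=1)`. -/
theorem osdprr_dependent_leakage_n_queries {Ω : Type*} [MeasurableSpace Ω]
    (μ : Measure Ω) [IsProbabilityMeasure μ]
    (Xi Xj : Ω → Bool) (hXi : Measurable Xi) (hXj : Measurable Xj)
    (n : ℕ) (M : Fin n → Ω → Bool) (hM : ∀ k, Measurable (M k))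
    (εi : ℝ) (hεi : 0 < εi)
    (hpos : ∀ a b : Bool, 0 < μ {ω | Xi ω = a ∧ Xj ω = b})
    -- each mechanism is an OSDPRR with parameter εᵢ for Xᵢ
    (hrel0 : ∀ k, μ {ω | M k ω = true ∧ Xi ω = false} = 0)
    (hrel1 : ∀ k, (μ {ω | M k ω = true ∧ Xi ω = true}).toReal
        = (1 - Real.exp (-εi)) * (μ {ω | Xi ω = true}).toReal)
    -- mutual conditional independence of the mechanisms given Xᵢ
    (hCI1 : ∀ (m : Fin n → Bool) (a : Bool),
      μ {ω | (∀ k, M k ω = m k) ∧ Xi ω = a} * μ {ω | Xi ω = a} ^ (n - 1)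
        = ∏ k, μ {ω | M k ω = m k ∧ Xi ω = a})
    -- conditional independence of the tuple of mechanisms and Xⱼ given Xᵢ
    (hCI2 : ∀ (m : Fin n → Bool) (a b : Bool),
      μ {ω | (∀ k, M k ω = m k) ∧ Xi ω = a ∧ Xj ω = b} * μ {ω | Xi ω = a}
        = μ {ω | (∀ k, M k ω = m k) ∧ Xi ω = a} * μ {ω | Xi ω = a ∧ Xj ω = b}) :
    condProb μ {ω | Xj ω = false} {ω | ∀ k, M k ω = false}
        / condProb μ {ω | Xj ω = true} {ω | ∀ k, M k ω = false}
      = ((condProb μ {ω | Xi ω = false} {ω | Xj ω = false} * (Real.exp (n * εi) - 1) + 1)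
          / (condProb μ {ω | Xi ω = false} {ω | Xj ω = true} * (Real.exp (n * εi) - 1) + 1))
        * ((μ {ω | Xj ω = false}).toReal / (μ {ω | Xj ω = true}).toReal) :=
  osdprr_dependent_leakage_n_queries_general μ Xi Xj hXi n M hM εi hpos hrel0 hrel1 hCI1 hCI2
end

section
/- Let μ be a probability measure on Ω, let X be the Boolean sensitivity indicator of a record with θ = μ(X = 0) satisfying 0 < θ < 1, and let M be the release indicator produced by the OSDPRR mechanism with parameter ε > 0 for X. Define the mutual information I(X; M) = Σ_{x,m ∈ {0,1}} μ(X = x ∧ M = m) · log( μ(X = x ∧ M = m) / (μ(X = x)·μ(M = m)) ), with the convention that terms with μ(X = x ∧ M = m) = 0 contribute 0. Then I(X; M) = H₂(θ) − (θ + e^{−ε}(1 − θ)) · H₂( θ / (θ + e^{−ε}(1 − θ)) ), where H₂(p) = −p·log p − (1 − p)·log(1 − p) is the binary entropy function. -/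
/-!
The OSDPRR constraints determine the joint law of `(X, M)` completely: with `η = e^{-ε}`,
`P(X=0, M=0) = θ`, `P(X=0, M=1) = 0`, `P(X=1, M=0) = η(1-θ)` and `P(X=1, M=1) = (1-η)(1-θ)`,
so `P(M=0) = q := θ + η(1-θ)`. Substituting this table, the mutual information is
`-θ log q + η(1-θ) log (η/q) - (1-η)(1-θ) log (1-θ)`, and expanding `q · H₂(θ/q)` gives the same
expression. The logarithm identities involved need only `η ≠ 0` and `q ≠ 0`: a term `x · log (…)`
whose factor `x` vanishes is `0` on both sides.
-/

open MeasureTheory Real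

/-- The binary entropy function `H₂(p) = −p·log p − (1 − p)·log(1 − p)`
(with the convention `0 · log 0 = 0`, which holds automatically since `Real.log 0 = 0`). -/
noncomputable def binEnt (p : ℝ) : ℝ :=
  -p * Real.log p - (1 - p) * Real.log (1 - p)

namespace Real

lemma mul_log_div_mul_self (x y : ℝ) : x * log (x / (y * x)) = -(x * log y) := by
  rcases eq_or_ne x 0 with rfl | hx
  · simp
  · rw [div_mul_cancel_right₀ hx, log_inv, mul_neg]

lemma mul_log_div_of_ne_zero (x : ℝ) {y : ℝ} (hy : y ≠ 0) :
    x * log (x / y) = x * log x - x * log y := by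
  rcases eq_or_ne x 0 with rfl | hx
  · simp
  · rw [log_div hx hy, mul_sub]

lemma mul_log_mul (x y : ℝ) : x * y * log (x * y) = x * y * log x + x * y * log y := by
  have h := negMulLog_mul x y
  simp only [negMulLog] at h
  linarith

lemma mul_mul_log_mul_div_mul (x s y : ℝ) :
    x * s * log (x * s / (s * y)) = x * s * log (x / y) := by
  rcases eq_or_ne s 0 with rfl | hs
  · simp
  · rw [mul_comm s y, mul_div_mul_right _ _ hs]

end Real

lemma mul_binEnt_div {a q : ℝ} (hq : q ≠ 0) :
    q * binEnt (a / q) = -(a * log (a / q)) - (q - a) * log ((q - a) / q) := by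
  have h : 1 - a / q = (q - a) / q := by field_simp
  rw [binEnt, h]
  field_simp

/-- `J x m` plays the role of `P(X = x, M = m)`; the marginals are its row and column sums. -/
noncomputable def boolMutualInfo (J : Bool → Bool → ℝ) : ℝ :=
  ∑ x, ∑ m, J x m * log (J x m / ((∑ m', J x m') * ∑ x', J x' m))

def osdprrJoint (θ η : ℝ) : Bool → Bool → ℝ
  | false, false => θ
  | false, true => 0
  | true, false => η * (1 - θ)
  | true, true => (1 - η) * (1 - θ)

theorem boolMutualInfo_osdprrJoint {θ η : ℝ} (hη : η ≠ 0) (hq : θ + η * (1 - θ) ≠ 0) :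
    boolMutualInfo (osdprrJoint θ η)
      = binEnt θ - (θ + η * (1 - θ)) * binEnt (θ / (θ + η * (1 - θ))) := by
  simp only [boolMutualInfo, Fintype.sum_bool, osdprrJoint]
  set q := θ + η * (1 - θ)
  have hrow : (1 - η) * (1 - θ) + η * (1 - θ) = 1 - θ := by ring
  have hcol : η * (1 - θ) + θ = q := by ring
  have hsub : q - θ = η * (1 - θ) := by ring
  rw [hrow, hcol, add_zero, zero_add, zero_mul, zero_add, mul_comm θ q, mul_log_div_mul_self,
    mul_log_div_mul_self, mul_mul_log_mul_div_mul, log_div hη hq, mul_binEnt_div hq, hsub,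
    mul_log_div_of_ne_zero _ hq, mul_log_div_of_ne_zero _ hq, mul_log_mul, binEnt]
  ring

section Measure

variable {Ω : Type*} [MeasurableSpace Ω] {μ : Measure Ω}

lemma measureReal_setOf_eq_sum_bool [IsFiniteMeasure μ] {B : Ω → Bool} (hB : Measurable B)
    (p : Ω → Prop) : μ.real {ω | p ω} = ∑ b, μ.real {ω | p ω ∧ B ω = b} := by
  have hdiff : {ω | p ω} \ {ω | B ω = true} = {ω | p ω ∧ B ω = false} := by ext; simp
  rw [Fintype.sum_bool, ← hdiff, ← measureReal_inter_add_sdiff (hB (measurableSet_singleton true))]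
  rfl

lemma sum_mul_log_eq_boolMutualInfo [IsFiniteMeasure μ] {X M : Ω → Bool} (hX : Measurable X)
    (hM : Measurable M) :
    ∑ x, ∑ m, μ.real {ω | X ω = x ∧ M ω = m} *
        log (μ.real {ω | X ω = x ∧ M ω = m} / (μ.real {ω | X ω = x} * μ.real {ω | M ω = m}))
      = boolMutualInfo fun x m ↦ μ.real {ω | X ω = x ∧ M ω = m} := by
  have hrow (x : Bool) : μ.real {ω | X ω = x} = ∑ m, μ.real {ω | X ω = x ∧ M ω = m} :=
    measureReal_setOf_eq_sum_bool hM _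
  have hcol (m : Bool) : μ.real {ω | M ω = m} = ∑ x, μ.real {ω | X ω = x ∧ M ω = m} := by
    simp only [measureReal_setOf_eq_sum_bool hX fun ω ↦ M ω = m, and_comm]
  simp only [boolMutualInfo, hrow, hcol]

lemma osdprr_joint_eq [IsProbabilityMeasure μ] {X M : Ω → Bool} (hX : Measurable X)
    (hM : Measurable M) {η : ℝ} (h0 : μ {ω | M ω = true ∧ X ω = false} = 0)
    (h1 : μ.real {ω | M ω = true ∧ X ω = true} = (1 - η) * μ.real {ω | X ω = true}) :
    (fun x m ↦ μ.real {ω | X ω = x ∧ M ω = m}) = osdprrJoint (μ.real {ω | X ω = false}) η := by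
  set θ := μ.real {ω | X ω = false}
  have hXT : μ.real {ω | X ω = true} = 1 - θ := by
    have hmeas : MeasurableSet {ω | X ω = false} := hX (measurableSet_singleton false)
    rw [← probReal_compl_eq_one_sub hmeas]
    congr 1
    ext; simp
  have hFT : μ.real {ω | X ω = false ∧ M ω = true} = 0 := by
    rw [Set.ext fun _ ↦ and_comm, measureReal_def, h0, ENNReal.toReal_zero]
  have hTT : μ.real {ω | X ω = true ∧ M ω = true} = (1 - η) * (1 - θ) := by
    rw [Set.ext fun _ ↦ and_comm, h1, hXT]
  have hF := measureReal_setOf_eq_sum_bool (μ := μ) hM fun ω ↦ X ω = false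
  have hT := measureReal_setOf_eq_sum_bool (μ := μ) hM fun ω ↦ X ω = true
  rw [Fintype.sum_bool] at hF hT
  funext x m
  cases x <;> cases m <;> simp only [osdprrJoint] <;> linarith

end Measure

theorem osdprr_mutual_information_general {Ω : Type*} [MeasurableSpace Ω]
    (μ : Measure Ω) [IsProbabilityMeasure μ]
    (X M : Ω → Bool) (hXmeas : Measurable X) (hMmeas : Measurable M)
    (ε : ℝ)
    (θ : ℝ) (hθdef : θ = (μ {ω | X ω = false}).toReal)
    -- OSDPRR: a sensitive record is never released
    (hrel0 : μ {ω | M ω = true ∧ X ω = false} = 0)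
    -- OSDPRR: a non-sensitive record is released with probability 1 - e^{-ε}
    (hrel1 : (μ {ω | M ω = true ∧ X ω = true}).toReal
        = (1 - Real.exp (-ε)) * (μ {ω | X ω = true}).toReal) :
    (∑ x : Bool, ∑ m : Bool,
        (μ {ω | X ω = x ∧ M ω = m}).toReal *
          Real.log ((μ {ω | X ω = x ∧ M ω = m}).toReal
            / ((μ {ω | X ω = x}).toReal * (μ {ω | M ω = m}).toReal)))
      = binEnt θ
        - (θ + Real.exp (-ε) * (1 - θ))
            * binEnt (θ / (θ + Real.exp (-ε) * (1 - θ))) := by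
  simp only [← measureReal_def] at hθdef hrel1 ⊢
  have hη : 0 < exp (-ε) := exp_pos _
  have hθ_nonneg : 0 ≤ θ := hθdef ▸ measureReal_nonneg
  have hq : 0 < θ + exp (-ε) * (1 - θ) := by
    rcases (hθdef ▸ measureReal_le_one : θ ≤ 1).eq_or_lt with rfl | hθ1
    · norm_num
    · linarith [mul_pos hη (sub_pos.2 hθ1)]
  rw [sum_mul_log_eq_boolMutualInfo hXmeas hMmeas, osdprr_joint_eq hXmeas hMmeas hrel0 hrel1,
    ← hθdef]
  exact boolMutualInfo_osdprrJoint hη.ne' hq.ne'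

/-- **mutual information between X and M under OSDPRR.** With
`θ = P(X = 0) ∈ (0,1)`, the mutual information between the sensitivity indicator `X` and the
OSDPRR release indicator `M` with parameter `ε > 0` is
`I(X; M) = H₂(θ) − (θ + e^{−ε}(1 − θ)) · H₂(θ / (θ + e^{−ε}(1 − θ)))`.
Terms of the defining sum with zero joint probability contribute `0` automatically since
`Real.log 0 = 0`. -/
theorem osdprr_mutual_information {Ω : Type*} [MeasurableSpace Ω]
    (μ : Measure Ω) [IsProbabilityMeasure μ]
    (X M : Ω → Bool) (hXmeas : Measurable X) (hMmeas : Measurable M)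
    (ε : ℝ) (hε : 0 < ε)
    (θ : ℝ) (hθdef : θ = (μ {ω | X ω = false}).toReal)
    (hθ0 : 0 < θ) (hθ1 : θ < 1)
    -- OSDPRR: a sensitive record is never released
    (hrel0 : μ {ω | M ω = true ∧ X ω = false} = 0)
    -- OSDPRR: a non-sensitive record is released with probability 1 - e^{-ε}
    (hrel1 : (μ {ω | M ω = true ∧ X ω = true}).toReal
        = (1 - Real.exp (-ε)) * (μ {ω | X ω = true}).toReal) :
    (∑ x : Bool, ∑ m : Bool,
        (μ {ω | X ω = x ∧ M ω = m}).toReal *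
          Real.log ((μ {ω | X ω = x ∧ M ω = m}).toReal
            / ((μ {ω | X ω = x}).toReal * (μ {ω | M ω = m}).toReal)))
      = binEnt θ
        - (θ + Real.exp (-ε) * (1 - θ))
            * binEnt (θ / (θ + Real.exp (-ε) * (1 - θ))) :=
  osdprr_mutual_information_general μ X M hXmeas hMmeas ε θ hθdef hrel0 hrel1
end

section
/- Let μ be a probability measure on Ω, let Xᵢ, Xⱼ be Boolean sensitivity indicators with μ(Xᵢ = a ∧ Xⱼ = b) > 0 for all a, b ∈ {0,1}, and let Mᵢ be the release indicator produced by the OSDPRR mechanism with parameter ε > 0 for Xᵢ, with Mᵢ conditionally independent of Xⱼ given Xᵢ. Set θᵢ = μ(Xᵢ = 0), θⱼ = μ(Xⱼ = 0), δ₁ = P(Xᵢ = 0 | Xⱼ = 0), δ₂ = P(Xᵢ = 0 | Xⱼ = 1), f₁ = (δ₁(e^ε − 1) + 1)/(δ₂(e^ε − 1) + 1), f₂ = (1 − δ₁)/(1 − δ₂), and let θ₁, θ₂ ∈ (0,1) be determined by the odds relations θ₁/(1 − θ₁) = f₁·θⱼ/(1 − θⱼ) and θ₂/(1 − θ₂)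 = f₂·θⱼ/(1 − θⱼ). Define the mutual information I(Xⱼ; Mᵢ) = Σ_{x,m ∈ {0,1}} μ(Xⱼ = x ∧ Mᵢ = m) · log( μ(Xⱼ = x ∧ Mᵢ = m) / (μ(Xⱼ = x)·μ(Mᵢ = m)) ), with the convention that terms with μ(Xⱼ = x ∧ Mᵢ = m) = 0 contribute 0. Then I(Xⱼ; Mᵢ) = H₂(θⱼ) − H₂(θ₁)·(θᵢ + e^{−ε}(1 − θᵢ)) − H₂(θ₂)·(1 − e^{−ε})(1 − θᵢ), where H₂ is the binary entropy function. -/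
/-!
Because a sensitive record is never released and, given `Xᵢ`, the release is independent of
`Xⱼ`, the joint law of `(Xⱼ, Mᵢ)` is an explicit linear image of the joint law of `(Xᵢ, Xⱼ)`:
the withheld mass at `Xⱼ = x` is `P(Xᵢ = 0, Xⱼ = x) + e^{-ε} P(Xᵢ = 1, Xⱼ = x)` and the released
mass is `(1 - e^{-ε}) P(Xᵢ = 1, Xⱼ = x)`. For a binary `Xⱼ`, `I(Xⱼ; Mᵢ) = H₂(P(Xⱼ = 0))` minus the
average over `m` of `H₂(P(Xⱼ = 0 | Mᵢ = m))`, and Bayes' rule in odds form identifies these two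
posteriors with `θ₁` and `θ₂`.
-/

open MeasureTheory Real

theorem eq_div_add_of_odds_eq {θ u v : ℝ} (hu : 0 < u) (hv : 0 < v)
    (h : θ / (1 - θ) = u / v) : θ = u / (u + v) := by
  -- `θ = 1` would make the left side `θ / 0 = 0`.
  have hθ : 1 - θ ≠ 0 := by
    intro h0
    rw [h0, div_zero] at h
    exact (div_pos hu hv).ne h
  rw [div_eq_div_iff hθ hv.ne'] at h
  rw [eq_div_iff (by positivity)]
  linear_combination h

noncomputable def mutualInfo {α β : Type*} [Fintype α] [Fintype β] (p : α → β → ℝ) : ℝ :=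
  ∑ x, ∑ m, p x m * log (p x m / ((∑ m', p x m') * ∑ x', p x' m))

theorem mutualInfo_eq_binEnt_sub {β : Type*} [Fintype β] {p : Bool → β → ℝ}
    (hp : ∀ x m, 0 < p x m) (hsum : ∑ x, ∑ m, p x m = 1) :
    mutualInfo p
      = binEnt (∑ m, p false m) - ∑ m, (∑ x, p x m) * binEnt (p false m / ∑ x, p x m) := by
  have : Nonempty β := by
    by_contra hβ
    simp [not_nonempty_iff.mp hβ] at hsum
  set r₀ := ∑ m, p false m
  set r₁ := ∑ m, p true m
  have hr₀ : 0 < r₀ := Finset.sum_pos (fun m _ => hp false m) Finset.univ_nonempty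
  have hr₁ : 0 < r₁ := Finset.sum_pos (fun m _ => hp true m) Finset.univ_nonempty
  have hr : 1 - r₀ = r₁ := by
    rw [Fintype.sum_bool] at hsum
    linarith
  have hterm (m : β) : p true m * log (p true m / (r₁ * (p true m + p false m)))
        + p false m * log (p false m / (r₀ * (p true m + p false m)))
      = -(p false m * log r₀) - p true m * log r₁
        - (p true m + p false m) * binEnt (p false m / (p true m + p false m)) := by
    have hu := hp false m
    have hv := hp true m
    rw [binEnt, one_sub_div (by positivity), add_sub_cancel_right]
    simp (disch := positivity) only [log_div, log_mul]
    field_simp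
    ring
  calc mutualInfo p
      = ∑ m, (p true m * log (p true m / (r₁ * (p true m + p false m)))
          + p false m * log (p false m / (r₀ * (p true m + p false m)))) := by
        simp only [mutualInfo, Fintype.sum_bool, Finset.sum_add_distrib]
        rfl
    _ = ∑ m, (-(p false m * log r₀) - p true m * log r₁
          - (p true m + p false m) * binEnt (p false m / (p true m + p false m))) :=
        Finset.sum_congr rfl fun m _ => hterm m
    _ = _ := by
        simp only [Finset.sum_sub_distrib, Finset.sum_neg_distrib, ← Finset.sum_mul,
          Fintype.sum_bool]
        rw [binEnt, hr]
        ring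

section BoolValued

variable {Ω : Type*} [MeasurableSpace Ω] {μ : Measure Ω} [IsFiniteMeasure μ] {f : Ω → Bool}

theorem measureReal_eq_sum_bool_and_right (hf : Measurable f) (P : Ω → Prop) :
    μ.real {ω | P ω} = ∑ b, μ.real {ω | P ω ∧ f ω = b} := by
  rw [Fintype.sum_bool, ← measureReal_inter_add_sdiff (hf (measurableSet_singleton true))]
  congr 2
  ext ω
  simp

theorem measureReal_eq_sum_bool_and_left (hf : Measurable f) (P : Ω → Prop) :
    μ.real {ω | P ω} = ∑ b, μ.real {ω | f ω = b ∧ P ω} := by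
  simp only [measureReal_eq_sum_bool_and_right hf P, and_comm]

theorem sum_measureReal_bool_eq_one [IsProbabilityMeasure μ] (hf : Measurable f) :
    ∑ b, μ.real {ω | f ω = b} = 1 := by
  simpa using (measureReal_eq_sum_bool_and_left (μ := μ) hf (fun _ => True)).symm

theorem sum_mul_log_div_eq_mutualInfo {X M : Ω → Bool} (hX : Measurable X) (hM : Measurable M) :
    ∑ x, ∑ m, μ.real {ω | X ω = x ∧ M ω = m}
        * log (μ.real {ω | X ω = x ∧ M ω = m} / (μ.real {ω | X ω = x} * μ.real {ω | M ω = m}))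
      = mutualInfo fun x m => μ.real {ω | X ω = x ∧ M ω = m} := by
  have hXmarg (x : Bool) := measureReal_eq_sum_bool_and_right (μ := μ) hM (fun ω => X ω = x)
  have hMmarg (m : Bool) := measureReal_eq_sum_bool_and_left (μ := μ) hX (fun ω => M ω = m)
  simp only [hXmarg, hMmarg]
  rfl

end BoolValued

namespace OSDPRR

section Release

variable {Ω : Type*} [MeasurableSpace Ω] {μ : Measure Ω} [IsFiniteMeasure μ] {X Y M : Ω → Bool}
  {q : ℝ} {y : Bool}

theorem measureReal_released (hX : Measurable X) (hX_true : μ {ω | X ω = true} ≠ 0)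
    (hrel0 : μ {ω | M ω = true ∧ X ω = false} = 0)
    (hrel1 : μ.real {ω | M ω = true ∧ X ω = true} = (1 - q) * μ.real {ω | X ω = true})
    (hCI : μ {ω | M ω = true ∧ X ω = true ∧ Y ω = y} * μ {ω | X ω = true}
      = μ {ω | M ω = true ∧ X ω = true} * μ {ω | X ω = true ∧ Y ω = y}) :
    μ.real {ω | Y ω = y ∧ M ω = true} = (1 - q) * μ.real {ω | X ω = true ∧ Y ω = y} := by
  have hsensitive : μ.real {ω | X ω = false ∧ Y ω = y ∧ M ω = true} = 0 :=
    (measureReal_eq_zero_iff (by finiteness)).2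
      (measure_mono_null (fun _ h => ⟨h.2.2, h.1⟩ : _ ⊆ {ω | M ω = true ∧ X ω = false}) hrel0)
  have hrotate : {ω | M ω = true ∧ X ω = true ∧ Y ω = y}
      = {ω | X ω = true ∧ Y ω = y ∧ M ω = true} := Set.ext fun _ => and_rotate
  have hCI' := congrArg ENNReal.toReal hCI
  simp only [ENNReal.toReal_mul, ← measureReal_def, hrel1, hrotate] at hCI'
  rw [measureReal_eq_sum_bool_and_left hX, Fintype.sum_bool, hsensitive, add_zero]
  exact mul_right_cancel₀ ((measureReal_ne_zero_iff (by finiteness)).2 hX_true)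
    (hCI'.trans (by ring))

theorem measureReal_withheld (hX : Measurable X) (hM : Measurable M)
    (hrel : μ.real {ω | Y ω = y ∧ M ω = true} = (1 - q) * μ.real {ω | X ω = true ∧ Y ω = y}) :
    μ.real {ω | Y ω = y ∧ M ω = false}
      = μ.real {ω | X ω = false ∧ Y ω = y} + q * μ.real {ω | X ω = true ∧ Y ω = y} := by
  have hsplitM := measureReal_eq_sum_bool_and_right (μ := μ) hM (fun ω => Y ω = y)
  have hsplitX := measureReal_eq_sum_bool_and_left (μ := μ) hX (fun ω => Y ω = y)
  rw [Fintype.sum_bool] at hsplitM hsplitX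
  linear_combination hsplitX - hsplitM - hrel

end Release

/-- If `a u v = P(Xᵢ = u, Xⱼ = v)` and a non-sensitive record is withheld with probability `q`
(`q = e^{-ε}` for OSDPRR), then `releaseTable a q x m = P(Xⱼ = x, Mᵢ = m)`. -/
def releaseTable (a : Bool → Bool → ℝ) (q : ℝ) (x : Bool) : Bool → ℝ
  | false => a false x + q * a true x
  | true => (1 - q) * a true x

variable {a : Bool → Bool → ℝ} {q : ℝ}

theorem releaseTable_pos (ha : ∀ u v, 0 < a u v) (hq : 0 < q) (hq1 : q < 1) (x m : Bool) :
    0 < releaseTable a q x m := by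
  have := ha false x
  have := ha true x
  have := sub_pos.2 hq1
  cases m <;> simp only [releaseTable] <;> positivity

theorem sum_releaseTable (x : Bool) : ∑ m, releaseTable a q x m = ∑ u, a u x := by
  simp only [releaseTable, Fintype.sum_bool]
  ring

theorem posterior_odds_withheld (ha : ∀ u v, 0 < a u v) (hq : 0 < q) :
    (a false false / (∑ u, a u false) * (q⁻¹ - 1) + 1)
        / (a false true / (∑ u, a u true) * (q⁻¹ - 1) + 1)
        * ((∑ u, a u false) / ∑ u, a u true)
      = releaseTable a q false false / releaseTable a q true false := by
  have hlikelihood (u v : ℝ) (huv : v + u ≠ 0) :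
      u / (v + u) * (q⁻¹ - 1) + 1 = (u + q * v) / (q * (v + u)) := by
    field_simp
    ring
  have := ha false false
  have := ha false true
  have := ha true false
  have := ha true true
  simp only [Fintype.sum_bool, releaseTable]
  rw [hlikelihood _ _ (by positivity), hlikelihood _ _ (by positivity)]
  field_simp

theorem posterior_odds_released (ha : ∀ u v, 0 < a u v) (hq1 : q < 1) :
    (1 - a false false / ∑ u, a u false) / (1 - a false true / ∑ u, a u true)
        * ((∑ u, a u false) / ∑ u, a u true)
      = releaseTable a q false true / releaseTable a q true true := by
  have := ha false false
  have := ha false true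
  have := ha true false
  have := ha true true
  have := sub_pos.2 hq1
  simp only [Fintype.sum_bool, releaseTable]
  rw [one_sub_div (by positivity), one_sub_div (by positivity), add_sub_cancel_right,
    add_sub_cancel_right]
  field_simp

theorem mutualInfo_releaseTable (ha : ∀ u v, 0 < a u v) (hsum : ∑ u, ∑ v, a u v = 1)
    {ε θ₁ θ₂ : ℝ} (hε : 0 < ε)
    (hθ₁ : θ₁ / (1 - θ₁)
      = (a false false / (∑ u, a u false) * (rexp ε - 1) + 1)
          / (a false true / (∑ u, a u true) * (rexp ε - 1) + 1)
          * ((∑ u, a u false) / (1 - ∑ u, a u false)))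
    (hθ₂ : θ₂ / (1 - θ₂)
      = (1 - a false false / ∑ u, a u false) / (1 - a false true / ∑ u, a u true)
          * ((∑ u, a u false) / (1 - ∑ u, a u false))) :
    mutualInfo (releaseTable a (rexp (-ε)))
      = binEnt (∑ u, a u false)
        - binEnt θ₁ * (∑ v, a false v + rexp (-ε) * (1 - ∑ v, a false v))
        - binEnt θ₂ * ((1 - rexp (-ε)) * (1 - ∑ v, a false v)) := by
  set q := rexp (-ε) with hq_def
  have hq : 0 < q := exp_pos _
  have hq1 : q < 1 := exp_lt_one_iff.2 (neg_neg_of_pos hε)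
  have hexp : rexp ε = q⁻¹ := by rw [hq_def, exp_neg, inv_inv]
  have hcompl : 1 - ∑ u, a u false = ∑ u, a u true := by
    rw [← hsum, Finset.sum_comm, Fintype.sum_bool]
    ring
  have hT := releaseTable_pos ha hq hq1
  rw [hexp, hcompl, posterior_odds_withheld ha hq] at hθ₁
  rw [hcompl, posterior_odds_released ha hq1] at hθ₂
  have htotal : ∑ x, ∑ m, releaseTable a q x m = 1 := by
    simp only [sum_releaseTable]
    rwa [Finset.sum_comm]
  have hθ₁' := eq_div_add_of_odds_eq (hT _ _) (hT _ _) hθ₁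
  have hθ₂' := eq_div_add_of_odds_eq (hT _ _) (hT _ _) hθ₂
  rw [mutualInfo_eq_binEnt_sub hT htotal, sum_releaseTable]
  simp only [Fintype.sum_bool] at hsum ⊢
  rw [add_comm (releaseTable a q true false), add_comm (releaseTable a q true true), ← hθ₁', ← hθ₂']
  simp only [releaseTable]
  linear_combination (-(q * binEnt θ₁) - (1 - q) * binEnt θ₂) * hsum

end OSDPRR

theorem osdprr_cross_mutual_information_general {Ω : Type*} [MeasurableSpace Ω]
    (μ : Measure Ω) [IsProbabilityMeasure μ]
    (Xi Xj Mi : Ω → Bool)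
    (hXi : Measurable Xi) (hXj : Measurable Xj) (hMi : Measurable Mi)
    (ε : ℝ) (hε : 0 < ε)
    (hpos : ∀ a b : Bool, 0 < μ {ω | Xi ω = a ∧ Xj ω = b})
    -- OSDPRR for Xᵢ: a sensitive record is never released
    (hrel0 : μ {ω | Mi ω = true ∧ Xi ω = false} = 0)
    -- OSDPRR for Xᵢ: a non-sensitive record is released with probability 1 - e^{-ε}
    (hrel1 : (μ {ω | Mi ω = true ∧ Xi ω = true}).toReal
        = (1 - Real.exp (-ε)) * (μ {ω | Xi ω = true}).toReal)
    -- conditional independence of Mᵢ and Xⱼ given Xᵢ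
    (hCI : ∀ m a b : Bool,
      μ {ω | Mi ω = m ∧ Xi ω = a ∧ Xj ω = b} * μ {ω | Xi ω = a}
        = μ {ω | Mi ω = m ∧ Xi ω = a} * μ {ω | Xi ω = a ∧ Xj ω = b})
    -- the named quantities
    (θi θj δ₁ δ₂ f₁ f₂ θ₁ θ₂ : ℝ)
    (hθi : θi = (μ {ω | Xi ω = false}).toReal)
    (hθj : θj = (μ {ω | Xj ω = false}).toReal)
    (hδ₁ : δ₁ = condProb μ {ω | Xi ω = false} {ω | Xj ω = false})
    (hδ₂ : δ₂ = condProb μ {ω | Xi ω = false} {ω | Xj ω = true})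
    (hf₁ : f₁ = (δ₁ * (Real.exp ε - 1) + 1) / (δ₂ * (Real.exp ε - 1) + 1))
    (hf₂ : f₂ = (1 - δ₁) / (1 - δ₂))
    (hθ₁odds : θ₁ / (1 - θ₁) = f₁ * (θj / (1 - θj)))
    (hθ₂odds : θ₂ / (1 - θ₂) = f₂ * (θj / (1 - θj))) :
    (∑ x : Bool, ∑ m : Bool,
        (μ {ω | Xj ω = x ∧ Mi ω = m}).toReal *
          Real.log ((μ {ω | Xj ω = x ∧ Mi ω = m}).toReal
            / ((μ {ω | Xj ω = x}).toReal * (μ {ω | Mi ω = m}).toReal)))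
      = binEnt θj
        - binEnt θ₁ * (θi + Real.exp (-ε) * (1 - θi))
        - binEnt θ₂ * ((1 - Real.exp (-ε)) * (1 - θi)) := by
  simp only [← measureReal_def]
  set a : Bool → Bool → ℝ := fun u v => μ.real {ω | Xi ω = u ∧ Xj ω = v}
  have ha (u v : Bool) : 0 < a u v := ENNReal.toReal_pos (hpos u v).ne' (measure_ne_top _ _)
  have hXi_true : μ {ω | Xi ω = true} ≠ 0 :=
    ((hpos true true).trans_le (measure_mono fun _ h => h.1)).ne'
  have hjoint : (fun x m => μ.real {ω | Xj ω = x ∧ Mi ω = m})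
      = OSDPRR.releaseTable a (rexp (-ε)) := by
    funext x m
    have hrel := OSDPRR.measureReal_released hXi hXi_true hrel0 hrel1 (hCI true true x)
    cases m
    exacts [OSDPRR.measureReal_withheld hXi hMi hrel, hrel]
  have hXj_marg (v : Bool) : μ.real {ω | Xj ω = v} = ∑ u, a u v :=
    measureReal_eq_sum_bool_and_left hXi _
  have hXi_marg (u : Bool) : μ.real {ω | Xi ω = u} = ∑ v, a u v :=
    measureReal_eq_sum_bool_and_right hXj _
  have htotal : ∑ u, ∑ v, a u v = 1 := by
    simp only [← hXi_marg]
    exact sum_measureReal_bool_eq_one hXi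
  rw [sum_mul_log_div_eq_mutualInfo hXj hMi, hjoint]
  subst hθi hθj hδ₁ hδ₂ hf₁ hf₂
  simp only [condProb, ← measureReal_def, ← Set.ofPred_and, hXj_marg, hXi_marg] at hθ₁odds hθ₂odds ⊢
  exact OSDPRR.mutualInfo_releaseTable ha htotal hε hθ₁odds hθ₂odds

/-- **mutual information between Xⱼ and Mᵢ under OSDPRR with dependency.** With
`θᵢ = P(Xᵢ = 0)`, `θⱼ = P(Xⱼ = 0)`, `δ₁ = P(Xᵢ = 0 | Xⱼ = 0)`, `δ₂ = P(Xᵢ = 0 | Xⱼ = 1)`,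
`f₁ = (δ₁(e^ε − 1) + 1)/(δ₂(e^ε − 1) + 1)`, `f₂ = (1 − δ₁)/(1 − δ₂)`, and `θ₁, θ₂ ∈ (0,1)`
determined by the odds relations `θ₁/(1 − θ₁) = f₁·θⱼ/(1 − θⱼ)` and
`θ₂/(1 − θ₂) = f₂·θⱼ/(1 − θⱼ)`, we have
`I(Xⱼ; Mᵢ) = H₂(θⱼ) − H₂(θ₁)·(θᵢ + e^{−ε}(1 − θᵢ)) − H₂(θ₂)·(1 − e^{−ε})(1 − θᵢ)`. -/
theorem osdprr_cross_mutual_information {Ω : Type*} [MeasurableSpace Ω]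
    (μ : Measure Ω) [IsProbabilityMeasure μ]
    (Xi Xj Mi : Ω → Bool)
    (hXi : Measurable Xi) (hXj : Measurable Xj) (hMi : Measurable Mi)
    (ε : ℝ) (hε : 0 < ε)
    (hpos : ∀ a b : Bool, 0 < μ {ω | Xi ω = a ∧ Xj ω = b})
    -- OSDPRR for Xᵢ: a sensitive record is never released
    (hrel0 : μ {ω | Mi ω = true ∧ Xi ω = false} = 0)
    -- OSDPRR for Xᵢ: a non-sensitive record is released with probability 1 - e^{-ε}
    (hrel1 : (μ {ω | Mi ω = true ∧ Xi ω = true}).toReal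
        = (1 - Real.exp (-ε)) * (μ {ω | Xi ω = true}).toReal)
    -- conditional independence of Mᵢ and Xⱼ given Xᵢ
    (hCI : ∀ m a b : Bool,
      μ {ω | Mi ω = m ∧ Xi ω = a ∧ Xj ω = b} * μ {ω | Xi ω = a}
        = μ {ω | Mi ω = m ∧ Xi ω = a} * μ {ω | Xi ω = a ∧ Xj ω = b})
    -- the named quantities
    (θi θj δ₁ δ₂ f₁ f₂ θ₁ θ₂ : ℝ)
    (hθi : θi = (μ {ω | Xi ω = false}).toReal)
    (hθj : θj = (μ {ω | Xj ω = false}).toReal)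
    (hδ₁ : δ₁ = condProb μ {ω | Xi ω = false} {ω | Xj ω = false})
    (hδ₂ : δ₂ = condProb μ {ω | Xi ω = false} {ω | Xj ω = true})
    (hf₁ : f₁ = (δ₁ * (Real.exp ε - 1) + 1) / (δ₂ * (Real.exp ε - 1) + 1))
    (hf₂ : f₂ = (1 - δ₁) / (1 - δ₂))
    (hθ₁mem : θ₁ ∈ Set.Ioo (0 : ℝ) 1) (hθ₂mem : θ₂ ∈ Set.Ioo (0 : ℝ) 1)
    (hθ₁odds : θ₁ / (1 - θ₁) = f₁ * (θj / (1 - θj)))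
    (hθ₂odds : θ₂ / (1 - θ₂) = f₂ * (θj / (1 - θj))) :
    (∑ x : Bool, ∑ m : Bool,
        (μ {ω | Xj ω = x ∧ Mi ω = m}).toReal *
          Real.log ((μ {ω | Xj ω = x ∧ Mi ω = m}).toReal
            / ((μ {ω | Xj ω = x}).toReal * (μ {ω | Mi ω = m}).toReal)))
      = binEnt θj
        - binEnt θ₁ * (θi + Real.exp (-ε) * (1 - θi))
        - binEnt θ₂ * ((1 - Real.exp (-ε)) * (1 - θi)) :=
  osdprr_cross_mutual_information_general μ Xi Xj Mi hXi hXj hMi ε hε hpos hrel0 hrel1 hCI θi θj δ₁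
    δ₂ f₁ f₂ θ₁ θ₂ hθi hθj hδ₁ hδ₂ hf₁ hf₂ hθ₁odds hθ₂odds
end
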